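/- arXiv:2601.10664 — 6 statements merged into one kernel-verified Lean document; each statement's English description precedes it below -/
import Mathlib

section
/- Let X and Θ be subsets of the reals and U : X × Θ → ℝ. Suppose that for each θ, the function x ↦ U(x,θ) is quasiconcave and differentiable, and that for each x the partial derivative U₁(x,θ) = ∂U/∂x(x,θ) satisfies single crossing in θ (i.e., for θ' > θ, U₁(x,θ) ≥ 0 implies U₁(x,θ') ≥ 0, and U₁(x,θ) > 0 implies U₁(x,θ') > 0). Then U satisfies the interval dominance order in (x;θ): for all x̂ > x such that U(x̂,θ) ≥ U(x',θ) for all x' ∈ X with x ≤ x' ≤ x̂, and for all θ̂ > θ, U(x̂,θ) − U(x,θ) ≥ 0 implies U(x̂,θ̂) − U(x,θ̂) ≥ 0, and U(x̂,θ) − U(x,θ) > 0 implies U(x̂,θ̂) − U(x,θ̂) > 0. -/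
/-!
Fix `θ < θhat` and `x < xhat` with `xhat` maximal for `U · θ` on `[x, xhat]`. At every `w` of
`[x, xhat)` the value `U w θ` is at most `U xhat θ`, so quasiconcavity keeps `U · θ` above `U w θ`
on `[w, xhat]` and `∂ₓU(w, θ) ≥ 0`. Single crossing carries this to `θhat`, hence `U · θhat` is
monotone on `[x, xhat]`, which is the weak half. If `U x θ < U xhat θ` but
`U x θhat = U xhat θhat`, the mean value theorem gives `z ∈ (x, xhat)` with `∂ₓU(z, θ) > 0`,
hence `∂ₓU(z, θhat) > 0`, while `U · θhat` is constant on `[x, xhat]`.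
-/

open Set Filter Topology

theorem QuasiconcaveOn.deriv_nonneg_of_le {s : Set ℝ} {f : ℝ → ℝ} (hf : QuasiconcaveOn ℝ s f)
    {z b : ℝ} (hz : z ∈ s) (hb : b ∈ s) (hzb : z < b) (hfzb : f z ≤ f b)
    (hd : DifferentiableAt ℝ f z) : 0 ≤ deriv f z := by
  have habove : ∀ w ∈ Icc z b, f z ≤ f w := fun w hw =>
    ((hf (f z)).ordConnected.out ⟨hz, le_rfl⟩ ⟨hb, hfzb⟩ hw).2
  have hslope : Tendsto (slope f z) (𝓝[>] z) (𝓝 (deriv f z)) :=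
    (hasDerivAt_iff_tendsto_slope.1 hd.hasDerivAt).mono_left
      (nhdsWithin_mono z fun _ hw => ne_of_gt hw)
  refine ge_of_tendsto hslope ?_
  filter_upwards [Ioo_mem_nhdsGT hzb] with w hw
  rw [slope_def_field]
  exact div_nonneg (sub_nonneg.2 (habove w (Ioo_subset_Icc_self hw))) (sub_pos.2 hw.1).le

theorem MonotoneOn.deriv_eq_zero_of_eq {g : ℝ → ℝ} {a b z : ℝ} (hg : MonotoneOn g (Icc a b))
    (hab : g a = g b) (hz : z ∈ Ioo a b) : deriv g z = 0 := by
  have hconst : g =ᶠ[𝓝 z] fun _ => g a := by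
    filter_upwards [Icc_mem_nhds hz.1 hz.2] with y hy
    have hay := hg (left_mem_Icc.2 (hz.1.trans hz.2).le) hy hy.1
    have hyb := hg hy (right_mem_Icc.2 (hz.1.trans hz.2).le) hy.2
    exact le_antisymm (hab ▸ hyb) hay
  rw [hconst.deriv_eq, deriv_const]

/-- Interval dominance order from quasiconcavity, differentiability, and SC1 of the
marginal (Quah–Strulovici / Lemma 1 of the paper). -/
theorem stmt_0 (X Θ : Set ℝ) (U : ℝ → ℝ → ℝ)
    (hqc : ∀ θ ∈ Θ, QuasiconcaveOn ℝ X (fun x => U x θ))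
    (hdiff : ∀ θ ∈ Θ, ∀ x ∈ X, DifferentiableAt ℝ (fun x' => U x' θ) x)
    (hSC1 : ∀ x ∈ X, ∀ θ ∈ Θ, ∀ θ' ∈ Θ, θ < θ' →
      (0 ≤ deriv (fun x' => U x' θ) x → 0 ≤ deriv (fun x' => U x' θ') x) ∧
      (0 < deriv (fun x' => U x' θ) x → 0 < deriv (fun x' => U x' θ') x)) :
    ∀ x ∈ X, ∀ xhat ∈ X, x < xhat →
      ∀ θ ∈ Θ, ∀ θhat ∈ Θ, θ < θhat →
        (∀ x' ∈ X, x ≤ x' → x' ≤ xhat → U x' θ ≤ U xhat θ) →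
          (U x θ ≤ U xhat θ → U x θhat ≤ U xhat θhat) ∧
          (U x θ < U xhat θ → U x θhat < U xhat θhat) := by
  intro x hx xhat hxhat hxx θ hθ θhat hθhat hθθ hmax
  have hIcc : Icc x xhat ⊆ X := (hqc θ hθ).convex.ordConnected.out hx hxhat
  have hdiffOn : ∀ θ' ∈ Θ, DifferentiableOn ℝ (fun x' => U x' θ') (Icc x xhat) :=
    fun θ' hθ' w hw => (hdiff θ' hθ' w (hIcc hw)).differentiableWithinAt
  have hmono : MonotoneOn (fun x' => U x' θhat) (Icc x xhat) := by
    refine monotoneOn_of_deriv_nonneg (convex_Icc x xhat) (hdiffOn θhat hθhat).continuousOn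
      ((hdiffOn θhat hθhat).mono interior_subset) fun w hw => ?_
    rw [interior_Icc] at hw
    have hwX : w ∈ X := hIcc (Ioo_subset_Icc_self hw)
    exact (hSC1 w hwX θ hθ θhat hθhat hθθ).1 <| (hqc θ hθ).deriv_nonneg_of_le hwX hxhat hw.2
      (hmax w hwX hw.1.le hw.2.le) (hdiff θ hθ w hwX)
  have hle : U x θhat ≤ U xhat θhat :=
    hmono (left_mem_Icc.2 hxx.le) (right_mem_Icc.2 hxx.le) hxx.le
  refine ⟨fun _ => hle, fun hlt => hle.lt_of_ne fun heq => ?_⟩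
  obtain ⟨z, hz, hslope⟩ := exists_deriv_eq_slope (fun x' => U x' θ) hxx
    (hdiffOn θ hθ).continuousOn ((hdiffOn θ hθ).mono Ioo_subset_Icc_self)
  have hpos : 0 < deriv (fun x' => U x' θ) z :=
    hslope ▸ div_pos (sub_pos.2 hlt) (sub_pos.2 hxx)
  exact ((hSC1 z (hIcc (Ioo_subset_Icc_self hz)) θ hθ θhat hθhat hθθ).2 hpos).ne'
    (hmono.deriv_eq_zero_of_eq heq hz)
end

section
/- Suppose f, g : S → ℝ are both SC1 (single crossing from below) functions on a totally ordered set S, and they satisfy signed-ratio monotonicity. Then every nonnegative linear combination αf + βg with α, β ≥ 0 is SC1. -/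
/-!
`SC1 f` says exactly that `sign ∘ f` is monotone. Fix `s < t` and put `h = α f + β g`.
If `h s < 0` there is nothing to prove. If both summands of `h s` are nonnegative, each keeps
its sign at `t`. If they have opposite signs, say `f s > 0 > g s`, the ratio condition
rearranges to `f t * h s ≤ f s * h t`, a comparison with positive coefficients, so `h` cannot
lose its sign between `s` and `t`.
-/

/-- Single crossing from below. -/
def SC1 {S : Type*} [LinearOrder S] (f : S → ℝ) : Prop :=
  ∀ s shat : S, s < shat → (0 ≤ f s → 0 ≤ f shat) ∧ (0 < f s → 0 < f shat)

/-- Signed-ratio monotonicity of Quah–Strulovici. -/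
def SignedRatioMono {S : Type*} [LinearOrder S] (f g : S → ℝ) : Prop :=
  (∀ s shat : S, s < shat → g s < 0 → 0 < f s → -(g shat) / f shat ≤ -(g s) / f s) ∧
  (∀ s shat : S, s < shat → f s < 0 → 0 < g s → -(f shat) / g shat ≤ -(f s) / g s)

open SignType

section LinearOrder

variable {α : Type*} [Zero α] [LinearOrder α] {a b : α}

theorem sign_pos_iff : 0 < sign a ↔ 0 < a := by
  simpa only [not_le] using sign_nonpos_iff.not

theorem sign_le_sign_iff : sign a ≤ sign b ↔ (0 ≤ a → 0 ≤ b) ∧ (0 < a → 0 < b) := by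
  have key : ∀ s t : SignType, s ≤ t ↔ (0 ≤ s → 0 ≤ t) ∧ (0 < s → 0 < t) := by decide
  rw [key, sign_nonneg_iff, sign_nonneg_iff, sign_pos_iff, sign_pos_iff]

end LinearOrder

theorem sc1_iff_monotone_sign {S : Type*} [LinearOrder S] {f : S → ℝ} :
    SC1 f ↔ Monotone (fun s ↦ sign (f s)) := by
  simp only [SC1, monotone_iff_forall_lt, sign_le_sign_iff]

section OrderedRing

variable {α : Type*} [Ring α] [LinearOrder α] [IsStrictOrderedRing α] {a b c d a' b' : α}

theorem sign_mul_of_pos (hc : 0 < c) (a : α) : sign (c * a) = sign a := by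
  rw [sign_mul, sign_pos hc, one_mul]

theorem sign_mul_le_sign_mul (h : sign a ≤ sign b) (hc : 0 ≤ c) :
    sign (c * a) ≤ sign (c * b) := by
  rcases hc.eq_or_lt with rfl | hc
  · simp
  · rwa [sign_mul_of_pos hc, sign_mul_of_pos hc]

theorem sign_le_sign_of_mul_le_mul (hc : 0 < c) (hd : 0 < d) (h : c * a ≤ d * b) :
    sign a ≤ sign b := by
  simpa only [sign_mul_of_pos hc, sign_mul_of_pos hd] using sign.monotone h

theorem sign_add_le_sign_add_of_nonneg (ha : sign a ≤ sign a') (hb : sign b ≤ sign b')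
    (ha₀ : 0 ≤ a) (hb₀ : 0 ≤ b) : sign (a + b) ≤ sign (a' + b') := by
  rw [sign_le_sign_iff] at *
  have ha'₀ := ha.1 ha₀
  have hb'₀ := hb.1 hb₀
  refine ⟨fun _ ↦ add_nonneg ha'₀ hb'₀, fun hab ↦ ?_⟩
  rcases ha₀.eq_or_lt with rfl | ha₀
  · exact add_pos_of_nonneg_of_pos ha'₀ (hb.2 (by simpa using hab))
  · exact add_pos_of_pos_of_nonneg (ha.2 ha₀) hb'₀

end OrderedRing

section OrderedField

variable {α : Type*} [Field α] [LinearOrder α] [IsStrictOrderedRing α] {a b a' b' : α}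

theorem sign_add_le_sign_add_of_neg_div_le (ha : sign a ≤ sign a') (ha₀ : 0 < a)
    (hratio : -b' / a' ≤ -b / a) {x y : α} (hy : 0 ≤ y) :
    sign (x * a + y * b) ≤ sign (x * a' + y * b') := by
  have ha'₀ : 0 < a' := (sign_le_sign_iff.mp ha).2 ha₀
  have hcross : b * a' ≤ b' * a := by
    rw [div_le_div_iff₀ ha'₀ ha₀] at hratio
    linarith
  exact sign_le_sign_of_mul_le_mul ha'₀ ha₀ <| by
    linear_combination mul_le_mul_of_nonneg_left hcross hy

theorem sign_add_le_sign_add (ha : sign a ≤ sign a') (hb : sign b ≤ sign b')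
    (hab : b < 0 → 0 < a → -b' / a' ≤ -b / a) (hba : a < 0 → 0 < b → -a' / b' ≤ -a / b)
    {x y : α} (hx : 0 ≤ x) (hy : 0 ≤ y) :
    sign (x * a + y * b) ≤ sign (x * a' + y * b') := by
  rcases lt_or_ge (x * a + y * b) 0 with hneg | hnonneg
  · rw [sign_neg hneg]
    exact bot_le
  rcases lt_or_ge (x * a) 0 with hxa | hxa <;> rcases lt_or_ge (y * b) 0 with hyb | hyb
  · linarith
  · have ha₀ := neg_of_mul_neg_right hxa hx
    have hb₀ := pos_of_mul_pos_right (by linarith : 0 < y * b) hy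
    rw [add_comm, add_comm (x * a')]
    exact sign_add_le_sign_add_of_neg_div_le hb hb₀ (hba ha₀ hb₀) hx
  · have hb₀ := neg_of_mul_neg_right hyb hy
    have ha₀ := pos_of_mul_pos_right (by linarith : 0 < x * a) hx
    exact sign_add_le_sign_add_of_neg_div_le ha ha₀ (hab hb₀ ha₀) hy
  · exact sign_add_le_sign_add_of_nonneg (sign_mul_le_sign_mul ha hx) (sign_mul_le_sign_mul hb hy)
      hxa hyb

end OrderedField

/-- Nonnegative linear combinations of SC1 functions satisfying signed-ratio
monotonicity are SC1 (Quah–Strulovici aggregation). -/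
theorem stmt_2 {S : Type*} [LinearOrder S] (f g : S → ℝ)
    (hf : SC1 f) (hg : SC1 g) (hsr : SignedRatioMono f g)
    (α β : ℝ) (hα : 0 ≤ α) (hβ : 0 ≤ β) :
    SC1 (fun s => α * f s + β * g s) := by
  rw [sc1_iff_monotone_sign] at *
  refine monotone_iff_forall_lt.2 fun s t hst ↦ ?_
  exact sign_add_le_sign_add (hf hst.le) (hg hst.le) (hsr.1 s t hst) (hsr.2 s t hst) hα hβ
end

section
/- Under rank-dependent utility with ω' > 0 and u* twice continuously differentiable with u*'' < 0, the total derivative d/dy [u(y+t, F_{y+t̃})] = ∫_{t̲}^t ω'(F_{t̃}(s)) u*''(y+s) ds is strictly decreasing in t for every y and every distribution F_{t̃}; moreover if ω is concave (ω'' ≤ 0) and u*''' ≥ 0 then d/dy [u₁₁(y+t, F_{y+t̃})] = ω''(F_{t̃}(t)) f_{t̃}(t) u*''(y+t) + ω'(F_{t̃}(t)) u*'''(y+t) ≥ 0 almost everywhere (where F_{t̃} has density f_{t̃}). -/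
open MeasureTheory intervalIntegral

/-- Precautionary-saving conditions under rank-dependent utility: the total
derivative `d/dy u(y+t, F_{y+t̃}) = ∫_{t̲}^t ω'(F_{t̃}(s)) u*''(y+s) ds` (an
identity stated via `HasDerivAt`) is strictly decreasing in `t`; and if
`ω'' ≤ 0` and `u*''' ≥ 0` then
`d/dy u₁₁ = ω''(F_{t̃}(t)) f_{t̃}(t) u*''(y+t) + ω'(F_{t̃}(t)) u*'''(y+t) ≥ 0`. -/
theorem stmt_11 (ω ustar Ft f : ℝ → ℝ) (tlo : ℝ)
    (hω : ContDiff ℝ 2 ω) (hu : ContDiff ℝ 3 ustar)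
    (hFt : Monotone Ft) (hFtc : Continuous Ft)
    (hω' : ∀ p, 0 < deriv ω p)
    (hu'' : ∀ z, deriv (deriv ustar) z < 0) :
    (∀ t y : ℝ,
      HasDerivAt (fun y' => ∫ s in tlo..t, deriv ω (Ft s) * deriv ustar (y' + s))
        (∫ s in tlo..t, deriv ω (Ft s) * deriv (deriv ustar) (y + s)) y) ∧
    (∀ y : ℝ, StrictAntiOn
      (fun t => ∫ s in tlo..t, deriv ω (Ft s) * deriv (deriv ustar) (y + s))
      (Set.Ici tlo)) ∧
    ((∀ p, deriv (deriv ω) p ≤ 0) → (∀ z, 0 ≤ deriv (deriv (deriv ustar)) z) →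
      ∀ t y : ℝ, 0 ≤ f t →
        0 ≤ deriv (deriv ω) (Ft t) * f t * deriv (deriv ustar) (y + t)
            + deriv ω (Ft t) * deriv (deriv (deriv ustar)) (y + t)) := by
  -- continuity of the various derivatives
  have hωd : Continuous (deriv ω) := hω.continuous_deriv (by norm_num)
  have hu1 : ContDiff ℝ 2 (deriv ustar) := by
    have := (contDiff_succ_iff_deriv (n := 2)).mp (by exact_mod_cast hu)
    exact this.2.2
  have hu1d : Differentiable ℝ (deriv ustar) := hu1.differentiable (by norm_num)
  have hu2 : ContDiff ℝ 1 (deriv (deriv ustar)) := by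
    have := (contDiff_succ_iff_deriv (n := 1)).mp (by exact_mod_cast hu1)
    exact this.2.2
  have hu2c : Continuous (deriv (deriv ustar)) := hu2.continuous
  have hgcont : ∀ y : ℝ, Continuous fun s => deriv ω (Ft s) * deriv (deriv ustar) (y + s) :=
    fun y => (hωd.comp hFtc).mul (hu2c.comp (continuous_const.add continuous_id))
  refine ⟨?_, ?_, ?_⟩
  · -- differentiation under the integral sign
    intro t y
    -- a uniform bound on the derivative over a compact set
    obtain ⟨M, hM⟩ : ∃ M, ∀ p ∈ Metric.closedBall y 1 ×ˢ Set.uIcc tlo t,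
        |deriv ω (Ft p.2) * deriv (deriv ustar) (p.1 + p.2)| ≤ M := by
      have hc : Continuous fun p : ℝ × ℝ =>
          |deriv ω (Ft p.2) * deriv (deriv ustar) (p.1 + p.2)| := by fun_prop
      obtain ⟨M, hM⟩ := ((isCompact_closedBall y 1).prod isCompact_uIcc).exists_bound_of_continuousOn
        hc.continuousOn
      exact ⟨M, fun p hp => by simpa using hM p hp⟩
    have key := intervalIntegral.hasDerivAt_integral_of_dominated_loc_of_deriv_le
      (μ := volume) (a := tlo) (b := t) (𝕜 := ℝ)
      (F := fun x s => deriv ω (Ft s) * deriv ustar (x + s))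
      (F' := fun x s => deriv ω (Ft s) * deriv (deriv ustar) (x + s))
      (x₀ := y) (bound := fun _ => M) (s := Metric.ball y 1) (Metric.ball_mem_nhds y one_pos) ?_ ?_ ?_ ?_ ?_ ?_
    · exact key.2
    · filter_upwards with x
      exact ((hωd.comp hFtc).mul
        ((hu1.continuous).comp (continuous_const.add continuous_id))).aestronglyMeasurable
    · exact ((hωd.comp hFtc).mul
        ((hu1.continuous).comp (continuous_const.add continuous_id))).intervalIntegrable _ _
    · exact (hgcont y).aestronglyMeasurable
    · filter_upwards with s hs x hx
      exact hM (x, s) ⟨Metric.ball_subset_closedBall hx, Set.Ioc_subset_Icc_self hs⟩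
    · exact intervalIntegrable_const
    · filter_upwards with s _ x _
      have h1 : HasDerivAt (fun x : ℝ => x + s) 1 x := (hasDerivAt_id x).add_const s
      have h2 : HasDerivAt (deriv ustar) (deriv (deriv ustar) (x + s)) (x + s) :=
        (hu1d (x + s)).hasDerivAt
      have := h2.comp x h1
      simpa using this.const_mul (deriv ω (Ft s))
  · intro y a _ b _ hab
    have hInt : ∀ c d : ℝ, IntervalIntegrable
        (fun s => deriv ω (Ft s) * deriv (deriv ustar) (y + s)) volume c d :=
      fun c d => (hgcont y).intervalIntegrable c d
    have hsplit : (∫ s in tlo..a, deriv ω (Ft s) * deriv (deriv ustar) (y + s))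
        + (∫ s in a..b, deriv ω (Ft s) * deriv (deriv ustar) (y + s))
        = ∫ s in tlo..b, deriv ω (Ft s) * deriv (deriv ustar) (y + s) :=
      intervalIntegral.integral_add_adjacent_intervals (hInt _ _) (hInt _ _)
    have hneg : 0 < ∫ s in a..b, -(deriv ω (Ft s) * deriv (deriv ustar) (y + s)) := by
      apply intervalIntegral.intervalIntegral_pos_of_pos_on ((hInt a b).neg)
      · intro x _
        have := mul_pos (hω' (Ft x)) (neg_pos.mpr (hu'' (y + x)))
        rw [mul_neg] at this
        simpa using this
      · exact hab
    rw [intervalIntegral.integral_neg] at hneg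
    simp only []
    linarith
  · intro hω'' hu''' t y hf
    have h1 : 0 ≤ deriv (deriv ω) (Ft t) * f t * deriv (deriv ustar) (y + t) := by
      have := mul_nonpos_of_nonpos_of_nonneg (hω'' (Ft t)) hf
      nlinarith [hu'' (y + t)]
    have h2 : 0 ≤ deriv ω (Ft t) * deriv (deriv (deriv ustar)) (y + t) :=
      mul_nonneg (hω' _).le (hu''' _)
    linarith
end

section
/- Kreps–Porteus local utility and positive precautionary saving: let u(z,F) = u*(z)·φ'(∫u*(t)dF(t)) with u*, φ three-times continuously differentiable, u*' > 0, φ' > 0. Then the total derivative d/dy u₁₁(y+t, F_{y+t̃}) = u*'''(y+t)·φ'(E[u*(y+t̃)]) + u*''(y+t)·φ''(E[u*(y+t̃)])·E[u*'(y+t̃)]. Consequently, if u*'' < 0, u*''' ≥ 0, and φ'' ≤ 0, then d/dy u₁₁(y+t, F_{y+t̃}) ≥ 0 for all y, t, t̃. -/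
open MeasureTheory

/-- Kreps–Porteus local utility `u(z,F) = u*(z)·φ'(∫ u* dF)`: the total derivative
`d/dy u₁₁(y+t, F_{y+t̃}) = u*'''(y+t)φ'(E[u*(y+t̃)]) + u*''(y+t)φ''(E[u*(y+t̃)])E[u*'(y+t̃)]`
(stated via `HasDerivAt`), and it is nonnegative when `u*'' < 0`, `u*''' ≥ 0`,
`φ'' ≤ 0`. -/
theorem stmt_16 (ustar φ : ℝ → ℝ) (ν : Measure ℝ) [IsProbabilityMeasure ν]
    (hu : ContDiff ℝ 3 ustar) (hφ : ContDiff ℝ 3 φ)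
    (hu' : ∀ z, 0 < deriv ustar z) (hφ' : ∀ z, 0 < deriv φ z)
    (hEu : ∀ y : ℝ, HasDerivAt (fun y' => ∫ τ, ustar (y' + τ) ∂ν)
      (∫ τ, deriv ustar (y + τ) ∂ν) y)
    (hint : ∀ y : ℝ, Integrable (fun τ => deriv ustar (y + τ)) ν)
    (t : ℝ) :
    (∀ y : ℝ, HasDerivAt
        (fun y' => deriv (deriv ustar) (y' + t) * deriv φ (∫ τ, ustar (y' + τ) ∂ν))
        (deriv (deriv (deriv ustar)) (y + t) * deriv φ (∫ τ, ustar (y + τ) ∂ν)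
          + deriv (deriv ustar) (y + t) * deriv (deriv φ) (∫ τ, ustar (y + τ) ∂ν)
            * (∫ τ, deriv ustar (y + τ) ∂ν)) y) ∧
    ((∀ z, deriv (deriv ustar) z < 0) → (∀ z, 0 ≤ deriv (deriv (deriv ustar)) z) →
      (∀ z, deriv (deriv φ) z ≤ 0) →
      ∀ y : ℝ,
        0 ≤ deriv (deriv (deriv ustar)) (y + t) * deriv φ (∫ τ, ustar (y + τ) ∂ν)
            + deriv (deriv ustar) (y + t) * deriv (deriv φ) (∫ τ, ustar (y + τ) ∂ν)
              * (∫ τ, deriv ustar (y + τ) ∂ν)) := by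
  constructor
  · intro y
    have hu'' : Differentiable ℝ (deriv (deriv ustar)) := by
      have := (hu.iterate_deriv' 1 2).differentiable (by norm_num)
      simpa [iteratedDeriv] using this
    have hφ1 : Differentiable ℝ (deriv φ) := by
      have := (hφ.iterate_deriv' 2 1).differentiable (by norm_num)
      simpa [iteratedDeriv] using this
    have h1 : HasDerivAt (fun y' => deriv (deriv ustar) (y' + t))
        (deriv (deriv (deriv ustar)) (y + t)) y := by
      have := ((hu''.differentiableAt (x := y + t)).hasDerivAt).comp y
        ((hasDerivAt_id y).add_const t)
      simp at this
      exact this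
    have h2 : HasDerivAt (fun y' => deriv φ (∫ τ, ustar (y' + τ) ∂ν))
        (deriv (deriv φ) (∫ τ, ustar (y + τ) ∂ν) * (∫ τ, deriv ustar (y + τ) ∂ν)) y :=
      ((hφ1.differentiableAt).hasDerivAt).comp y (hEu y)
    have := h1.mul h2
    exact this.congr_deriv (by ring)
  · intro h2 h3 hφ2 y
    have A : 0 ≤ deriv (deriv (deriv ustar)) (y + t) * deriv φ (∫ τ, ustar (y + τ) ∂ν) :=
      mul_nonneg (h3 _) (hφ' _).le
    have B : 0 ≤ ∫ τ, deriv ustar (y + τ) ∂ν :=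
      integral_nonneg fun τ => (hu' _).le
    have C : 0 ≤ deriv (deriv ustar) (y + t) * deriv (deriv φ) (∫ τ, ustar (y + τ) ∂ν) :=
      mul_nonneg_of_nonpos_of_nonpos (h2 _).le (hφ2 _)
    nlinarith [mul_nonneg C B]
end

section
/- Log-supermodularity of the smooth-ambiguity local utility: suppose φ₁ : ℝ × Θ → ℝ₊ is log-supermodular (in (value, θ)), f(s;λ) is a family of densities log-supermodular in (s,λ), π(λ) ≥ 0, and γ : S → ℝ is increasing with m(λ) := ∫γ(t)f(t;λ)dt increasing in λ. Then ū(s,θ) := ∫₀¹ φ₁(m(λ), θ) f(s;λ) π(λ) dλ is log-supermodular in (s,θ). -/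
/-!
Write the integrand as `a(λ,θ) b(λ,s) c(λ)` with `a(λ,θ) = φ₁(m λ, θ)`, `b(λ,s) = f(s;λ)` and
`c = π ≥ 0`; `a` is log-supermodular because `m` is increasing. Writing the difference of the two
products of integrals as a double integral over `(x,y)` and symmetrizing in `x ↔ y`, the integrand
becomes `c x c y` times the product of the `2 × 2` minors of `a` at `(x,y) × (θ,θ')` and of `b` at
`(x,y) × (s,s')`. Both minors have the sign of `y - x`, so the product is nonnegative.
-/

open MeasureTheory

def IsLogSupermodular {α β : Type*} [Preorder α] [Preorder β] (h : α → β → ℝ) : Prop :=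
  ∀ ⦃x x' : α⦄ ⦃y y' : β⦄, x ≤ x' → y ≤ y' → h x' y * h x y' ≤ h x' y' * h x y

namespace IsLogSupermodular

variable {α β γ : Type*} [Preorder β] [Preorder γ]

theorem flip [Preorder α] {h : α → β → ℝ} (hh : IsLogSupermodular h) :
    IsLogSupermodular (_root_.flip h) := fun _ _ _ _ hx hy => by
  simpa only [_root_.flip, mul_comm] using hh hy hx

theorem comp_left [Preorder α] {h : α → β → ℝ} (hh : IsLogSupermodular h) {g : γ → α}
    (hg : Monotone g) : IsLogSupermodular fun z y => h (g z) y :=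
  fun _ _ _ _ hz hy => hh (hg hz) hy

theorem mul_minor_nonneg [LinearOrder α] {a : α → β → ℝ} {b : α → γ → ℝ}
    (ha : IsLogSupermodular a) (hb : IsLogSupermodular b) (x y : α) {θ θ' : β} {s s' : γ}
    (hθ : θ ≤ θ') (hs : s ≤ s') :
    0 ≤ (a y θ' * a x θ - a y θ * a x θ') * (b y s' * b x s - b y s * b x s') := by
  rcases le_total x y with hxy | hyx
  · exact mul_nonneg (sub_nonneg.2 (ha hxy hθ)) (sub_nonneg.2 (hb hxy hs))
  · exact mul_nonneg_of_nonpos_of_nonpos (by linarith [ha hyx hθ]) (by linarith [hb hyx hs])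

end IsLogSupermodular

theorem integral_mul_integral_le_of_forall_add_le {α : Type*} [MeasurableSpace α]
    {μ : Measure α} {A B C D : α → ℝ}
    (hA : Integrable A μ) (hB : Integrable B μ) (hC : Integrable C μ) (hD : Integrable D μ)
    (h : ∀ x y, A x * B y + B x * A y ≤ C x * D y + D x * C y) :
    (∫ x, A x ∂μ) * (∫ x, B x ∂μ) ≤ (∫ x, C x ∂μ) * (∫ x, D x ∂μ) := by
  have inner : ∀ x, A x * ∫ y, B y ∂μ + B x * ∫ y, A y ∂μ
      ≤ C x * ∫ y, D y ∂μ + D x * ∫ y, C y ∂μ := by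
    intro x
    have hx : ∫ y, (A x * B y + B x * A y) ∂μ ≤ ∫ y, (C x * D y + D x * C y) ∂μ :=
      integral_mono ((hB.const_mul _).add (hA.const_mul _))
        ((hD.const_mul _).add (hC.const_mul _)) (h x)
    simpa only [integral_add (hB.const_mul _) (hA.const_mul _),
      integral_add (hD.const_mul _) (hC.const_mul _), integral_const_mul] using hx
  have outer : ∫ x, (A x * ∫ y, B y ∂μ + B x * ∫ y, A y ∂μ) ∂μ
      ≤ ∫ x, (C x * ∫ y, D y ∂μ + D x * ∫ y, C y ∂μ) ∂μ :=
    integral_mono ((hA.mul_const _).add (hB.mul_const _))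
      ((hC.mul_const _).add (hD.mul_const _)) inner
  simp only [integral_add (hA.mul_const _) (hB.mul_const _),
    integral_add (hC.mul_const _) (hD.mul_const _), integral_mul_const] at outer
  linarith

theorem isLogSupermodular_integral_mul_mul {α β γ : Type*} [MeasurableSpace α] [LinearOrder α]
    [Preorder β] [Preorder γ] {μ : Measure α} {a : α → β → ℝ} {b : α → γ → ℝ} {c : α → ℝ}
    (ha : IsLogSupermodular a) (hb : IsLogSupermodular b) (hc : ∀ x, 0 ≤ c x)
    (hint : ∀ s θ, Integrable (fun x => a x θ * b x s * c x) μ) :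
    IsLogSupermodular fun s θ => ∫ x, a x θ * b x s * c x ∂μ := by
  intro s s' θ θ' hs hθ
  refine integral_mul_integral_le_of_forall_add_le (hint _ _) (hint _ _) (hint _ _) (hint _ _)
    fun x y => ?_
  have hminor := mul_nonneg (mul_nonneg (hc x) (hc y)) (ha.mul_minor_nonneg hb x y hθ hs)
  linear_combination hminor

theorem stmt_17_general (φ₁ : ℝ → ℝ → ℝ) (f : ℝ → ℝ → ℝ) (π : ℝ → ℝ)
    (hφspm : ∀ v v' θ θ' : ℝ, v ≤ v' → θ ≤ θ' →
      φ₁ v' θ * φ₁ v θ' ≤ φ₁ v' θ' * φ₁ v θ)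
    (hfspm : ∀ s s' lam lam' : ℝ, s ≤ s' → lam ≤ lam' →
      f s' lam * f s lam' ≤ f s' lam' * f s lam)
    (hπ : ∀ lam, 0 ≤ π lam)
    (m : ℝ → ℝ)
    (hmmono : Monotone m)
    (hint : ∀ s θ : ℝ, IntervalIntegrable
      (fun lam => φ₁ (m lam) θ * f s lam * π lam) volume 0 1) :
    ∀ s s' θ θ' : ℝ, s ≤ s' → θ ≤ θ' →
      (∫ lam in (0:ℝ)..1, φ₁ (m lam) θ * f s' lam * π lam)
          * (∫ lam in (0:ℝ)..1, φ₁ (m lam) θ' * f s lam * π lam)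
        ≤ (∫ lam in (0:ℝ)..1, φ₁ (m lam) θ' * f s' lam * π lam)
          * (∫ lam in (0:ℝ)..1, φ₁ (m lam) θ * f s lam * π lam) := by
  have hφ : IsLogSupermodular φ₁ := fun _ _ _ _ => hφspm _ _ _ _
  have hf : IsLogSupermodular f := fun _ _ _ _ => hfspm _ _ _ _
  have hu := isLogSupermodular_integral_mul_mul (μ := volume.restrict (Set.Ioc 0 1))
    (hφ.comp_left hmmono) hf.flip hπ fun s θ => (hint s θ).1
  intro s s' θ θ' hs hθ
  simp only [intervalIntegral.integral_of_le zero_le_one]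
  exact hu hs hθ

/-- Log-supermodularity of the smooth-ambiguity local utility
`ū(s,θ) = ∫₀¹ φ₁(m(λ),θ) f(s;λ) π(λ) dλ` when `φ₁` and `f` are nonnegative
log-supermodular, `π ≥ 0`, `γ` is increasing, and `m(λ) = ∫ γ f(·;λ)` is
increasing. -/
theorem stmt_17 (φ₁ : ℝ → ℝ → ℝ) (f : ℝ → ℝ → ℝ) (π : ℝ → ℝ) (γ : ℝ → ℝ)
    (hφpos : ∀ v θ, 0 ≤ φ₁ v θ)
    (hφspm : ∀ v v' θ θ' : ℝ, v ≤ v' → θ ≤ θ' →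
      φ₁ v' θ * φ₁ v θ' ≤ φ₁ v' θ' * φ₁ v θ)
    (hfpos : ∀ s lam, 0 ≤ f s lam)
    (hfspm : ∀ s s' lam lam' : ℝ, s ≤ s' → lam ≤ lam' →
      f s' lam * f s lam' ≤ f s' lam' * f s lam)
    (hπ : ∀ lam, 0 ≤ π lam)
    (hγ : Monotone γ)
    (m : ℝ → ℝ) (hm : ∀ lam, m lam = ∫ t, γ t * f t lam)
    (hmmono : Monotone m)
    (hint : ∀ s θ : ℝ, IntervalIntegrable
      (fun lam => φ₁ (m lam) θ * f s lam * π lam) volume 0 1) :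
    ∀ s s' θ θ' : ℝ, s ≤ s' → θ ≤ θ' →
      (∫ lam in (0:ℝ)..1, φ₁ (m lam) θ * f s' lam * π lam)
          * (∫ lam in (0:ℝ)..1, φ₁ (m lam) θ' * f s lam * π lam)
        ≤ (∫ lam in (0:ℝ)..1, φ₁ (m lam) θ' * f s' lam * π lam)
          * (∫ lam in (0:ℝ)..1, φ₁ (m lam) θ * f s lam * π lam) :=
  stmt_17_general φ₁ f π hφspm hfspm hπ m hmmono hint
end

section
/- Single crossing of marginal utility implies strict single crossing of differences: let U : X × Θ → ℝ with X, Θ ⊆ ℝ, U differentiable and quasiconcave in x, and U₁(·,·) SC1 in θ for each x. Fix θ̂ > θ and x̂ > x with U(x̂,θ) ≥ U(x',θ) for all x' ∈ [x,x̂] ∩ X. If additionally U(x̂,θ) > U(x,θ), then U(x̂,θ̂) > U(x,θ̂). -/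
/-!
Quasiconcavity of `U(·,θ)` together with the maximality of `x̂` on `[x, x̂]` makes `U(·,θ)`
nondecreasing on `[x, x̂]`, so `U₁(·,θ) ≥ 0` there, and the mean value theorem gives a point
`c` with `U₁(c,θ) > 0`. SC1 transfers both facts to `θ̂`: `U(·,θ̂)` is nondecreasing on
`[x, x̂]` with `U₁(c,θ̂) > 0`; were `U(x,θ̂) = U(x̂,θ̂)`, monotonicity would make `U(·,θ̂)`
constant on `[x, x̂]` and `U₁(c,θ̂)` zero.
-/

open Set Filter Topology

section Quasiconcave

variable {β : Type*} [Preorder β] {s : Set ℝ} {f : ℝ → β} {a b : ℝ}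

theorem QuasiconcaveOn.Icc_subset_of_le (hf : QuasiconcaveOn ℝ s f) (ha : a ∈ s) (hb : b ∈ s)
    (hab : f a ≤ f b) : Icc a b ⊆ {z ∈ s | f a ≤ f z} :=
  (hf (f a)).ordConnected.out ⟨ha, le_rfl⟩ ⟨hb, hab⟩

theorem QuasiconcaveOn.monotoneOn_Icc (hf : QuasiconcaveOn ℝ s f) (ha : a ∈ s) (hb : b ∈ s)
    (hmax : ∀ y ∈ s, a ≤ y → y ≤ b → f y ≤ f b) : MonotoneOn f (Icc a b) := by
  intro y hy z hz hyz
  have hys : y ∈ s :=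
    (hf.Icc_subset_of_le ha hb (hmax a ha le_rfl (hy.1.trans hy.2)) hy).1
  exact (hf.Icc_subset_of_le hys hb (hmax y hys hy.1 hy.2) ⟨hyz, hz.2⟩).2

end Quasiconcave

section Deriv

variable {g : ℝ → ℝ} {a b : ℝ}

theorem MonotoneOn.deriv_nonneg_of_mem_Icc (hg : MonotoneOn g (Icc a b)) (hab : a < b)
    {y : ℝ} (hy : y ∈ Icc a b) (hd : DifferentiableAt ℝ g y) : 0 ≤ deriv g y := by
  rw [← hd.derivWithin (uniqueDiffOn_Icc hab y hy)]
  exact hg.derivWithin_nonneg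

theorem monotoneOn_Icc_of_deriv_nonneg (hd : ∀ y ∈ Icc a b, DifferentiableAt ℝ g y)
    (hg' : ∀ y ∈ Ioo a b, 0 ≤ deriv g y) : MonotoneOn g (Icc a b) := by
  have hdOn : DifferentiableOn ℝ g (Icc a b) := fun y hy => (hd y hy).differentiableWithinAt
  refine monotoneOn_of_deriv_nonneg (convex_Icc a b) hdOn.continuousOn ?_ ?_ <;>
    rw [interior_Icc]
  · exact hdOn.mono Ioo_subset_Icc_self
  · exact hg'

theorem MonotoneOn.lt_of_deriv_pos (hg : MonotoneOn g (Icc a b)) {c : ℝ} (hc : c ∈ Ioo a b)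
    (hpos : 0 < deriv g c) : g a < g b := by
  have hab : a ≤ b := (hc.1.trans hc.2).le
  refine (hg (left_mem_Icc.2 hab) (right_mem_Icc.2 hab) hab).lt_of_ne fun heq => hpos.ne' ?_
  have hconst : g =ᶠ[𝓝 c] fun _ => g a := by
    filter_upwards [Icc_mem_nhds hc.1 hc.2] with y hy
    exact le_antisymm (heq ▸ hg hy (right_mem_Icc.2 hab) hy.2) (hg (left_mem_Icc.2 hab) hy hy.1)
  rw [hconst.deriv_eq, deriv_const]

end Deriv

/-- Strict single crossing of differences: under quasiconcavity and
differentiability in `x` and SC1 of `U₁` in `θ`, if `x̂` maximizes `U(·,θ)` on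
`[x,x̂] ∩ X` and `U(x̂,θ) > U(x,θ)`, then `U(x̂,θ̂) > U(x,θ̂)` for `θ̂ > θ`. -/
theorem stmt_19 (X Θ : Set ℝ) (U : ℝ → ℝ → ℝ)
    (hqc : ∀ θ ∈ Θ, QuasiconcaveOn ℝ X (fun x => U x θ))
    (hdiff : ∀ θ ∈ Θ, ∀ x ∈ X, DifferentiableAt ℝ (fun x' => U x' θ) x)
    (hSC1 : ∀ x ∈ X, ∀ θ ∈ Θ, ∀ θ' ∈ Θ, θ < θ' →
      (0 ≤ deriv (fun x' => U x' θ) x → 0 ≤ deriv (fun x' => U x' θ') x) ∧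
      (0 < deriv (fun x' => U x' θ) x → 0 < deriv (fun x' => U x' θ') x))
    (x xhat θ θhat : ℝ) (hxX : x ∈ X) (hxhatX : xhat ∈ X)
    (hθ : θ ∈ Θ) (hθhat : θhat ∈ Θ) (hθθ : θ < θhat) (hxx : x < xhat)
    (hmax : ∀ x' ∈ X, x ≤ x' → x' ≤ xhat → U x' θ ≤ U xhat θ)
    (hstrict : U x θ < U xhat θ) :
    U x θhat < U xhat θhat := by
  have hIcc : Icc x xhat ⊆ X := fun y hy =>
    ((hqc θ hθ).Icc_subset_of_le hxX hxhatX hstrict.le hy).1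
  have hf_mono : MonotoneOn (fun x' => U x' θ) (Icc x xhat) :=
    (hqc θ hθ).monotoneOn_Icc hxX hxhatX hmax
  have hg_mono : MonotoneOn (fun x' => U x' θhat) (Icc x xhat) := by
    refine monotoneOn_Icc_of_deriv_nonneg (fun y hy => hdiff θhat hθhat y (hIcc hy)) ?_
    intro y hy
    have hyX := hIcc (Ioo_subset_Icc_self hy)
    exact (hSC1 y hyX θ hθ θhat hθhat hθθ).1 <|
      hf_mono.deriv_nonneg_of_mem_Icc hxx (Ioo_subset_Icc_self hy) (hdiff θ hθ y hyX)
  obtain ⟨c, hc, hslope⟩ := exists_deriv_eq_slope (fun x' => U x' θ) hxx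
    (fun y hy => (hdiff θ hθ y (hIcc hy)).continuousAt.continuousWithinAt)
    (fun y hy => (hdiff θ hθ y (hIcc (Ioo_subset_Icc_self hy))).differentiableWithinAt)
  have hf'c : 0 < deriv (fun x' => U x' θ) c := by
    rw [hslope]
    exact div_pos (sub_pos.2 hstrict) (sub_pos.2 hxx)
  exact hg_mono.lt_of_deriv_pos hc <|
    (hSC1 c (hIcc (Ioo_subset_Icc_self hc)) θ hθ θhat hθhat hθθ).2 hf'c
end
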